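/- With the successor triple (SST', bnd', rest') constructed from (SST, bnd, rest) as above, if (SST, bnd, rest) satisfies strict functoriality P, then (SST', bnd', rest') also satisfies P: for all f : Δ(k,l), g : Δ(l,m), and augmented boundaries (y, aug) : bnd' (x, Fill) m, one has rest' (g ∘Δ f) (y, aug) = rest' f (rest' g (y, aug)). -/

import Mathlib

def Δ (i j : ℕ) : Type := {f : Fin (i+1) → Fin (j+1) // StrictMono f}

def compΔ {i j k : ℕ} (g : Δ j k) (f : Δ i j) : Δ i k :=
  ⟨g.1 ∘ f.1, g.2.comp f.2⟩

structure Tri : Type 2 where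
  SST : Type 1
  bnd : SST → ℕ → Type 1
  rest : ∀ (x : SST) (k m : ℕ), Δ k m → bnd x m → bnd x k

def Func (t : Tri) : Prop :=
  ∀ (x : t.SST) (k l m : ℕ) (f : Δ k l) (g : Δ l m) (y : t.bnd x m),
    t.rest x k m (compΔ g f) y = t.rest x k l f (t.rest x l m g y)

/-- The successor triple: `SST' := Σ x, (bnd x (n+1) → Type 0)`,
`bnd' (x, Fill) m := Σ y : bnd x m, ∀ h : Δ(n+1,m), Fill (rest x (n+1) m h y)`,
restriction transporting the augmentation along functoriality. -/
def succTri (n : ℕ) (t : Tri) (hP : Func t) : Tri where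
  SST := Σ x : t.SST, (t.bnd x (n+1) → Type 0)
  bnd := fun xF m => Σ y : t.bnd xF.1 m, ∀ h : Δ (n+1) m, xF.2 (t.rest xF.1 (n+1) m h y)
  rest := fun xF k m f ya =>
    ⟨t.rest xF.1 k m f ya.1,
     fun h => (hP xF.1 (n+1) k m h f ya.1) ▸ ya.2 (compΔ f h)⟩

theorem compΔ_assoc {i j k l : ℕ} (h : Δ i j) (f : Δ j k) (g : Δ k l) :
    compΔ (compΔ g f) h = compΔ g (compΔ f h) := rfl

/- The first components agree by functoriality of `t`. The second components at `h` are
transports of `aug` at `(g ∘ f) ∘ h` and `g ∘ (f ∘ h)`; up to heterogeneous equality the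
transports disappear, so only associativity of composition in `Δ` remains. -/
theorem stmt_11 (n : ℕ) (t : Tri) (hP : Func t) : Func (succTri n t hP) := by
  rintro ⟨x, F⟩ k l m f g ⟨y, aug⟩
  refine Sigma.ext (hP x k l m f g y) (Function.hfunext rfl fun h _ hh => ?_)
  cases eq_of_heq hh
  simp only [succTri, eqRec_heq_iff, heq_eqRec_iff]
  rw [compΔ_assoc]
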